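/- arXiv:1710.11276 — 3 statements merged into one kernel-verified Lean document; each statement's English description precedes it below -/
import Mathlib

section
/- The function r ↦ c̄₂ / ( r·(c̄₁ + 2c̄₂γ'r + sqrt(2c̄₂γ' + 4c̄₂c̄₁γ'r + (2c̄₂γ'r)²)) ) is strictly decreasing on [1, ∞). Consequently, for two networks with eigenvalue ratios r₁ = λ_{k₁}/λ₂(L₁) and r₂ = λ_{k₂}/λ₂(L₂), r₁ > r₂ ≥ 1 implies τ₁* < τ₂*, and r₁ = r₂ implies τ₁* = τ₂*. -/
theorem stmt_7 (cb₁ cb₂ γ' : ℝ) (hcb₁ : 0 < cb₁) (hcb₂ : 0 < cb₂) (hγ' : 0 < γ')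
    (τStar : ℝ → ℝ)
    (hτ : ∀ r : ℝ, τStar r = cb₂ /
      (r * (cb₁ + 2 * cb₂ * γ' * r +
        Real.sqrt (2 * cb₂ * γ' + 4 * cb₂ * cb₁ * γ' * r + (2 * cb₂ * γ' * r) ^ 2)))) :
    StrictAntiOn τStar (Set.Ici 1) ∧
      (∀ r₁ r₂ : ℝ, 1 ≤ r₂ → r₂ < r₁ → τStar r₁ < τStar r₂) ∧
      (∀ r₁ r₂ : ℝ, 1 ≤ r₁ → 1 ≤ r₂ → r₁ = r₂ → τStar r₁ = τStar r₂) := by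
  have key : ∀ a b : ℝ, 1 ≤ a → a < b → τStar b < τStar a := by
    intro a b ha hab
    have ha0 : (0:ℝ) < a := lt_of_lt_of_le one_pos ha
    have hb0 : (0:ℝ) < b := lt_trans ha0 hab
    set Ea := 2 * cb₂ * γ' + 4 * cb₂ * cb₁ * γ' * a + (2 * cb₂ * γ' * a) ^ 2 with hEa
    set Eb := 2 * cb₂ * γ' + 4 * cb₂ * cb₁ * γ' * b + (2 * cb₂ * γ' * b) ^ 2 with hEb
    have hE : Ea ≤ Eb := by
      nlinarith [mul_pos (mul_pos hcb₂ hcb₁) hγ',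
        mul_pos (mul_pos (mul_pos hcb₂ hcb₂) (mul_pos hγ' hγ')) (mul_pos (add_pos ha0 hb0) (sub_pos.mpr hab))]
    have hs : Real.sqrt Ea ≤ Real.sqrt Eb := Real.sqrt_le_sqrt hE
    have hsa : 0 ≤ Real.sqrt Ea := Real.sqrt_nonneg _
    have hinner : cb₁ + 2 * cb₂ * γ' * a + Real.sqrt Ea <
        cb₁ + 2 * cb₂ * γ' * b + Real.sqrt Eb := by
      nlinarith [mul_pos hcb₂ hγ']
    have hinnerpos : 0 < cb₁ + 2 * cb₂ * γ' * a + Real.sqrt Ea := by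
      nlinarith [mul_pos hcb₂ hγ']
    have hD : a * (cb₁ + 2 * cb₂ * γ' * a + Real.sqrt Ea) <
        b * (cb₁ + 2 * cb₂ * γ' * b + Real.sqrt Eb) :=
      mul_lt_mul'' hab hinner (le_of_lt ha0) (le_of_lt hinnerpos)
    have hDpos : 0 < a * (cb₁ + 2 * cb₂ * γ' * a + Real.sqrt Ea) :=
      mul_pos ha0 hinnerpos
    rw [hτ a, hτ b]
    exact div_lt_div_of_pos_left hcb₂ hDpos hD
  refine ⟨fun a ha b _ hab => key a b ha hab, fun r₁ r₂ h1 h2 => key r₂ r₁ h1 h2,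
    fun r₁ r₂ _ _ h => by rw [h]⟩
end

section
/- On the interval J = [γ'/λ₂, ∞), the function φ(γ) = -(c̄₂ + c̄₁/(γλ)) + sqrt((c̄₂ + c̄₁/(γλ))² + 2c̄₂(λ₂γ - γ')/(λ²γ²)) is unimodal: there exists γ* in the interior of J such that φ is monotonically increasing on [γ'/λ₂, γ*] and monotonically decreasing on [γ*, ∞). -/
/-!
Writing `φ = -B + √(B² + C)` with `B = c̄₂ + c̄₁/(γλ) ≥ 0` and `C = 2c̄₂(λ₂γ - γ')/(λ²γ²)`, the
superlevel set `{γ ∈ J | r ≤ φ γ}` for `r > 0` is cut out by `r² + 2Br ≤ C`, which after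
multiplying by `λ²γ²` is a convex quadratic inequality in `γ`; hence `φ` is quasiconcave on `J`.
Moreover `φ` vanishes at `γ'/λ₂`, is positive beyond it and is bounded by `λ₂/(λ²γ)`, so it attains
its maximum over `J` at some interior `γ*`, and quasiconcavity makes `φ` increase up to `γ*` and
decrease after it.
-/

open Set Filter Topology

section

variable {𝕜 β : Type*} [Field 𝕜] [LinearOrder 𝕜] [IsStrictOrderedRing 𝕜] [LinearOrder β]
  {s : Set 𝕜} {f : 𝕜 → β} {c : 𝕜}

theorem QuasiconcaveOn.monotoneOn_of_isMaxOn (hf : QuasiconcaveOn 𝕜 s f) (hcs : c ∈ s)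
    (hc : IsMaxOn f s c) : MonotoneOn f (s ∩ Iic c) := by
  intro x hx y hy hxy
  exact ((hf (f x)).ordConnected.out ⟨hx.1, le_rfl⟩ ⟨hcs, hc hx.1⟩ ⟨hxy, hy.2⟩).2

theorem QuasiconcaveOn.antitoneOn_of_isMaxOn (hf : QuasiconcaveOn 𝕜 s f) (hcs : c ∈ s)
    (hc : IsMaxOn f s c) : AntitoneOn f (s ∩ Ici c) := by
  intro x hx y hy hxy
  exact ((hf (f y)).ordConnected.out ⟨hcs, hc hy.1⟩ ⟨hy.1, le_rfl⟩ ⟨hx.2, hxy⟩).2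

end

theorem ContinuousOn.exists_isMaxOn_Ici {f : ℝ → ℝ} {a b : ℝ} (hf : ContinuousOn f (Ici a))
    (hb : a ≤ b) (h : ∀ᶠ x in atTop, f x ≤ f b) : ∃ c ∈ Ici a, IsMaxOn f (Ici a) c := by
  refine hf.exists_isMaxOn' isClosed_Ici hb ?_
  rw [cocompact_eq_atBot_atTop, inf_sup_right, eventually_sup, eventually_inf_principal,
    eventually_inf_principal]
  exact ⟨(eventually_lt_atBot a).mono fun x hxa hx => absurd hx (not_le.2 hxa),
    h.mono fun x hx _ => hx⟩

theorem convexOn_quadratic {A : ℝ} (hA : 0 ≤ A) (B C : ℝ) :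
    ConvexOn ℝ univ fun x => A * x ^ 2 + B * x + C :=
  (((Even.convexOn_pow even_two).smul hA).add
    ((LinearMap.mul ℝ ℝ B).convexOn convex_univ)).add_const C

theorem neg_add_sqrt_sq_add_nonneg (B : ℝ) {C : ℝ} (hC : 0 ≤ C) : 0 ≤ -B + √(B ^ 2 + C) := by
  have := Real.sqrt_le_sqrt (le_add_of_nonneg_right hC : B ^ 2 ≤ B ^ 2 + C)
  rw [Real.sqrt_sq_eq_abs] at this
  linarith [le_abs_self B]

theorem neg_add_sqrt_sq_add_pos (B : ℝ) {C : ℝ} (hC : 0 < C) : 0 < -B + √(B ^ 2 + C) := by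
  have := Real.sqrt_lt_sqrt (sq_nonneg B) (lt_add_of_pos_right (B ^ 2) hC)
  rw [Real.sqrt_sq_eq_abs] at this
  linarith [le_abs_self B]

theorem neg_add_sqrt_sq_add_le {B C t : ℝ} (hBt : 0 ≤ B + t) (hC : C ≤ 2 * B * t + t ^ 2) :
    -B + √(B ^ 2 + C) ≤ t := by
  have : √(B ^ 2 + C) ≤ B + t := (Real.sqrt_le_left hBt).2 (by linarith)
  linarith

theorem le_neg_add_sqrt_sq_add_iff {B C x : ℝ} (hBx : 0 ≤ B + x) (hS : 0 ≤ B ^ 2 + C) :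
    x ≤ -B + √(B ^ 2 + C) ↔ x ^ 2 + 2 * B * x ≤ C := by
  rw [le_neg_add_iff_add_le, Real.le_sqrt hBx hS,
    show (B + x) ^ 2 = B ^ 2 + (x ^ 2 + 2 * B * x) by ring, add_le_add_iff_left]

/-- The paper's `φ`, with `c̄₁, c̄₂, λ, λ₂, γ'` written `b₁, b₂, l, l₂, g`. -/
noncomputable def phi (b₁ b₂ l l₂ g γ : ℝ) : ℝ :=
  -(b₂ + b₁ / (γ * l)) + √((b₂ + b₁ / (γ * l)) ^ 2 + 2 * b₂ * (l₂ * γ - g) / (l ^ 2 * γ ^ 2))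

section phi

variable {b₁ b₂ l l₂ g γ : ℝ}

theorem phi_nonneg (hb₂ : 0 ≤ b₂) (hγ : g ≤ l₂ * γ) : 0 ≤ phi b₁ b₂ l l₂ g γ :=
  neg_add_sqrt_sq_add_nonneg _ (div_nonneg (mul_nonneg (by positivity) (sub_nonneg.2 hγ))
    (by positivity))

theorem phi_pos (hb₂ : 0 < b₂) (hl : l ≠ 0) (hγ₀ : γ ≠ 0) (hγ : g < l₂ * γ) :
    0 < phi b₁ b₂ l l₂ g γ :=
  neg_add_sqrt_sq_add_pos _ (div_pos (mul_pos (by positivity) (sub_pos.2 hγ)) (by positivity))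

theorem phi_eq_zero (hb₁ : 0 ≤ b₁) (hb₂ : 0 ≤ b₂) (hl : 0 ≤ l) (hγ₀ : 0 ≤ γ) (hγ : l₂ * γ = g) :
    phi b₁ b₂ l l₂ g γ = 0 := by
  rw [phi, hγ, sub_self, mul_zero, zero_div, add_zero, Real.sqrt_sq (by positivity),
    neg_add_cancel]

theorem phi_le (hb₁ : 0 ≤ b₁) (hb₂ : 0 ≤ b₂) (hl : 0 < l) (hl₂ : 0 ≤ l₂) (hg : 0 ≤ g) (hγ : 0 < γ) :
    phi b₁ b₂ l l₂ g γ ≤ l₂ / (l ^ 2 * γ) := by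
  set B := b₂ + b₁ / (γ * l)
  set t := l₂ / (l ^ 2 * γ)
  have hB : b₂ ≤ B := le_add_of_nonneg_right (by positivity)
  have ht : 0 ≤ t := by positivity
  refine neg_add_sqrt_sq_add_le (by linarith) ?_
  calc 2 * b₂ * (l₂ * γ - g) / (l ^ 2 * γ ^ 2) ≤ 2 * b₂ * (l₂ * γ) / (l ^ 2 * γ ^ 2) := by
        gcongr; linarith
    _ = 2 * b₂ * t := by simp only [t]; field_simp
    _ ≤ 2 * B * t + t ^ 2 := by nlinarith

theorem tendsto_phi_atTop (hb₁ : 0 ≤ b₁) (hb₂ : 0 ≤ b₂) (hl : 0 < l) (hl₂ : 0 < l₂) (hg : 0 ≤ g) :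
    Tendsto (phi b₁ b₂ l l₂ g) atTop (𝓝 0) := by
  have hbound : Tendsto (fun γ => l₂ / (l ^ 2 * γ)) atTop (𝓝 0) :=
    tendsto_const_nhds.div_atTop (tendsto_id.const_mul_atTop (by positivity))
  refine tendsto_of_tendsto_of_tendsto_of_le_of_le' tendsto_const_nhds hbound ?_ ?_
  · filter_upwards [(tendsto_id.const_mul_atTop hl₂).eventually_ge_atTop g] with γ hγ
    exact phi_nonneg hb₂ hγ
  · filter_upwards [eventually_gt_atTop 0] with γ hγ
    exact phi_le hb₁ hb₂ hl hl₂.le hg hγ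

theorem continuousOn_phi (hl : l ≠ 0) : ContinuousOn (phi b₁ b₂ l l₂ g) (Ioi 0) := by
  unfold phi
  fun_prop (disch := intro x (hx : 0 < x); positivity)

theorem le_phi_iff (hb₁ : 0 ≤ b₁) (hb₂ : 0 ≤ b₂) (hl : 0 < l) (hγ₀ : 0 < γ) (hγ : g ≤ l₂ * γ)
    {r : ℝ} (hr : 0 ≤ r) :
    r ≤ phi b₁ b₂ l l₂ g γ ↔
      (r ^ 2 + 2 * r * b₂) * l ^ 2 * γ ^ 2 + (2 * r * b₁ * l - 2 * b₂ * l₂) * γ + 2 * b₂ * g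
        ≤ 0 := by
  have hD : 0 < l ^ 2 * γ ^ 2 := by positivity
  rw [phi, le_neg_add_sqrt_sq_add_iff (by positivity)
    (add_nonneg (sq_nonneg _) (div_nonneg (mul_nonneg (by positivity) (sub_nonneg.2 hγ)) hD.le)),
    ← sub_nonpos, ← mul_le_mul_iff_left₀ hD, zero_mul]
  congr! 1
  field_simp
  ring

theorem quasiconcaveOn_phi (hb₁ : 0 ≤ b₁) (hb₂ : 0 ≤ b₂) (hl : 0 < l) (hl₂ : 0 < l₂) (hg : 0 < g) :
    QuasiconcaveOn ℝ (Ici (g / l₂)) (phi b₁ b₂ l l₂ g) := by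
  have hdom : ∀ γ ∈ Ici (g / l₂), 0 < γ ∧ g ≤ l₂ * γ := fun γ hγ =>
    ⟨(div_pos hg hl₂).trans_le hγ, by rwa [mem_Ici, div_le_iff₀' hl₂] at hγ⟩
  intro r
  rcases le_or_gt r 0 with hr | hr
  · rw [sep_eq_self_iff_mem_true.2 ?_]
    · exact convex_Ici _
    exact fun γ hγ => hr.trans (phi_nonneg hb₂ (hdom γ hγ).2)
  · rw [sep_ext_iff.2 fun γ hγ => le_phi_iff hb₁ hb₂ hl (hdom γ hγ).1 (hdom γ hγ).2 hr.le]
    exact ((convexOn_quadratic (by positivity : 0 ≤ (r ^ 2 + 2 * r * b₂) * l ^ 2)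
      (2 * r * b₁ * l - 2 * b₂ * l₂) (2 * b₂ * g)).subset (subset_univ _)
      (convex_Ici _)).convex_le 0

end phi

theorem stmt_9 (α c₀ c₁ c₂ l l₂ : ℝ) (hα : 0 < α) (hc₀ : 0 < c₀) (hc₁ : 0 < c₁)
    (hc₂ : 0 < c₂) (hl₂ : 0 < l₂) (hl : l₂ ≤ l)
    (γ' cb₁ cb₂ : ℝ)
    (hγ' : γ' = (c₀ + c₂) ^ 2 / (4 * α) + c₁)
    (hcb₁ : cb₁ = (2 * α * c₁ + c₀ * c₂ + c₂ ^ 2) / c₂ ^ 2)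
    (hcb₂ : cb₂ = 2 * α / c₂ ^ 2)
    (φ : ℝ → ℝ)
    (hφ : ∀ γ : ℝ, φ γ = -(cb₂ + cb₁ / (γ * l)) +
      Real.sqrt ((cb₂ + cb₁ / (γ * l)) ^ 2 + 2 * cb₂ * (l₂ * γ - γ') / (l ^ 2 * γ ^ 2))) :
    ∃ γStar : ℝ, γ' / l₂ < γStar ∧
      MonotoneOn φ (Set.Icc (γ' / l₂) γStar) ∧
      AntitoneOn φ (Set.Ici γStar) := by
  obtain rfl : φ = phi cb₁ cb₂ l l₂ γ' := funext hφ
  have hl₀ : 0 < l := hl₂.trans_le hl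
  have hγ'₀ : 0 < γ' := by rw [hγ']; positivity
  have hb₁ : 0 ≤ cb₁ := by rw [hcb₁]; positivity
  have hb₂ : 0 < cb₂ := by rw [hcb₂]; positivity
  have ha : 0 < γ' / l₂ := div_pos hγ'₀ hl₂
  have hpos : 0 < phi cb₁ cb₂ l l₂ γ' (γ' / l₂ + 1) :=
    phi_pos hb₂ hl₀.ne' (by positivity) (by rw [mul_add, mul_div_cancel₀ _ hl₂.ne']; linarith)
  obtain ⟨γStar, hγStar : γ' / l₂ ≤ γStar, hmax⟩ :=
    ((continuousOn_phi hl₀.ne').mono fun γ hγ => ha.trans_le hγ).exists_isMaxOn_Ici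
      (le_add_of_nonneg_right zero_le_one)
      ((tendsto_phi_atTop hb₁ hb₂.le hl₀ hl₂ hγ'₀.le).eventually_le_const hpos)
  have hzero : phi cb₁ cb₂ l l₂ γ' (γ' / l₂) = 0 :=
    phi_eq_zero hb₁ hb₂.le hl₀.le ha.le (mul_div_cancel₀ _ hl₂.ne')
  have hne : γ' / l₂ ≠ γStar := by
    rintro rfl
    linarith [isMaxOn_iff.1 hmax (γ' / l₂ + 1) (by simp)]
  have hqc := quasiconcaveOn_phi hb₁ hb₂.le hl₀ hl₂ hγ'₀
  exact ⟨γStar, lt_of_le_of_ne hγStar hne,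
    (hqc.monotoneOn_of_isMaxOn hγStar hmax).mono fun γ hγ => ⟨hγ.1, hγ.2⟩,
    (hqc.antitoneOn_of_isMaxOn hγStar hmax).mono fun γ hγ => ⟨hγStar.trans hγ, hγ⟩⟩
end

section
/- The formula τ*(r) = c̄₂ / ( r·(c̄₁ + 2c̄₂γ'r + sqrt(2c̄₂γ' + 4c̄₂c̄₁γ'r + (2c̄₂γ'r)²)) ) attains its maximum value over r ∈ [1, ∞) uniquely at r = 1. -/
theorem stmt_16 (cb₁ cb₂ γ' : ℝ) (hcb₁ : 0 < cb₁) (hcb₂ : 0 < cb₂) (hγ' : 0 < γ')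
    (τStar : ℝ → ℝ)
    (hτ : ∀ r : ℝ, τStar r = cb₂ /
      (r * (cb₁ + 2 * cb₂ * γ' * r +
        Real.sqrt (2 * cb₂ * γ' + 4 * cb₂ * cb₁ * γ' * r + (2 * cb₂ * γ' * r) ^ 2)))) :
    ∀ r : ℝ, 1 ≤ r → r ≠ 1 → τStar r < τStar 1 := by
  intro r hr hne
  have hr1 : 1 < r := lt_of_le_of_ne hr (Ne.symm hne)
  rw [hτ r, hτ 1]
  set s1 := Real.sqrt (2 * cb₂ * γ' + 4 * cb₂ * cb₁ * γ' * 1 + (2 * cb₂ * γ' * 1) ^ 2) with hs1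
  set sr := Real.sqrt (2 * cb₂ * γ' + 4 * cb₂ * cb₁ * γ' * r + (2 * cb₂ * γ' * r) ^ 2) with hsr
  have hs1nn : 0 ≤ s1 := Real.sqrt_nonneg _
  have hsrnn : 0 ≤ sr := Real.sqrt_nonneg _
  have hsle : s1 ≤ sr := by
    apply Real.sqrt_le_sqrt
    have h1 : 0 ≤ (r - 1) * (cb₂ * cb₁ * γ') := mul_nonneg (by linarith) (by positivity)
    have h2 : 0 ≤ ((r - 1) * (r + 1)) * (cb₂ * γ') ^ 2 :=
      mul_nonneg (mul_nonneg (by linarith) (by linarith)) (by positivity)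
    nlinarith [h1, h2]
  have hD1 : 0 < 1 * (cb₁ + 2 * cb₂ * γ' * 1 + s1) := by positivity
  have hfr : 0 < cb₁ + 2 * cb₂ * γ' * r + sr := by positivity
  have hlt : 1 * (cb₁ + 2 * cb₂ * γ' * 1 + s1) < r * (cb₁ + 2 * cb₂ * γ' * r + sr) := by
    nlinarith [mul_pos hcb₂ hγ']
  exact div_lt_div_of_pos_left hcb₂ hD1 hlt
end
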